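/- arXiv:2305.11352 — 5 statements merged into one kernel-verified Lean document; each statement's English description precedes it below -/
import Mathlib

section
/- For every integer r ≥ 1 and real τ with |τ| + 1 ≤ r and r ≥ |τ|e/2, the Bessel-function tail bound 4|τ|^r/(2^r r!) is at most c·exp(−(|τ|e/2)·w·log w), where w = 2r/(|τ|e) and c = 4/(√(2π)·e^{1/13}). -/
open Real

lemma numbase : Real.sqrt (2*π) * Real.exp (1/13) ≤ Real.exp 1 := by
  have hs : Real.sqrt (2*π) ≤ 2.50664 := by
    rw [show (2.50664:ℝ) = Real.sqrt (2.50664^2) by rw [Real.sqrt_sq]; norm_num]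
    apply Real.sqrt_le_sqrt
    nlinarith [Real.pi_lt_d6]
  have he : Real.exp (1/13) ≤ 1.081 := by
    apply le_of_pow_le_pow_left₀ (n := 13) (by norm_num) (by norm_num)
    rw [← Real.exp_nat_mul]
    norm_num
    nlinarith [Real.exp_one_lt_d9]
  have := Real.exp_one_gt_d9
  nlinarith [Real.sqrt_nonneg (2*π), Real.exp_pos (1/13:ℝ)]

lemma stirling_lb (r : ℕ) (hr : 1 ≤ r) :
    Real.sqrt (2*π) * Real.exp (1/13) * (r:ℝ)^r ≤ (Nat.factorial r : ℝ) * Real.exp 1 ^ r := by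
  induction r, hr using Nat.le_induction with
  | base =>
      simp only [pow_one, Nat.factorial_one, Nat.cast_one, one_mul, mul_one]
      exact numbase
  | succ n hn ih =>
      have hn' : (0:ℝ) < n := by exact_mod_cast hn
      -- (n+1) ≤ n * exp(1/n)
      have key : ((n:ℝ)+1)^n ≤ (n:ℝ)^n * Real.exp 1 := by
        have h1 : (n:ℝ)+1 ≤ (n:ℝ) * Real.exp (1/n) := by
          have h := Real.add_one_le_exp (1/(n:ℝ))
          have hinv : (n:ℝ) * (1/n) = 1 := by field_simp
          nlinarith [mul_le_mul_of_nonneg_left h hn'.le]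
        calc ((n:ℝ)+1)^n ≤ ((n:ℝ) * Real.exp (1/n))^n := by
              apply pow_le_pow_left₀ (by positivity) h1
          _ = (n:ℝ)^n * Real.exp 1 := by
              rw [mul_pow, ← Real.exp_nat_mul]
              congr 2
              field_simp
      have hC : (0:ℝ) ≤ Real.sqrt (2*π) * Real.exp (1/13) := by positivity
      have hfact : (Nat.factorial (n+1) : ℝ) = ((n:ℝ)+1) * (Nat.factorial n : ℝ) := by
        rw [Nat.factorial_succ]; push_cast; ring
      have hep : (0:ℝ) < Real.exp 1 ^ n := by positivity
      push_cast
      rw [hfact]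
      calc Real.sqrt (2*π) * Real.exp (1/13) * ((n:ℝ)+1)^(n+1)
          = (Real.sqrt (2*π) * Real.exp (1/13) * ((n:ℝ)+1)^n) * ((n:ℝ)+1) := by ring
        _ ≤ (Real.sqrt (2*π) * Real.exp (1/13) * ((n:ℝ)^n * Real.exp 1)) * ((n:ℝ)+1) := by
            apply mul_le_mul_of_nonneg_right _ (by positivity)
            apply mul_le_mul_of_nonneg_left key hC
        _ = (Real.sqrt (2*π) * Real.exp (1/13) * (n:ℝ)^n) * Real.exp 1 * ((n:ℝ)+1) := by ring
        _ ≤ ((Nat.factorial n : ℝ) * Real.exp 1 ^ n) * Real.exp 1 * ((n:ℝ)+1) := by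
            apply mul_le_mul_of_nonneg_right _ (by positivity)
            apply mul_le_mul_of_nonneg_right ih (Real.exp_pos 1).le
        _ = ((n:ℝ)+1) * (Nat.factorial n : ℝ) * Real.exp 1 ^ (n+1) := by ring

/-- For an integer `r ≥ 1` and real `τ` with `|τ| + 1 ≤ r` and `r ≥ |τ|e/2`, the
Bessel tail bound `4|τ|^r / (2^r r!)` is at most `c · exp(−(|τ|e/2) w log w)` where
`w = 2r/(|τ|e)` and `c = 4/(√(2π) e^{1/13})`. -/
theorem bessel_tail_bound (τ : ℝ) (r : ℕ) (hr : 1 ≤ r)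
    (h1 : |τ| + 1 ≤ (r : ℝ)) (h2 : |τ| * Real.exp 1 / 2 ≤ (r : ℝ)) :
    4 * |τ| ^ r / (2 ^ r * (Nat.factorial r : ℝ)) ≤
      (4 / (Real.sqrt (2 * π) * Real.exp (1 / 13))) *
        Real.exp (-(|τ| * Real.exp 1 / 2) *
          ((2 * r / (|τ| * Real.exp 1)) * Real.log (2 * r / (|τ| * Real.exp 1)))) := by
  rcases eq_or_lt_of_le (abs_nonneg τ) with hτ | ht
  · rw [← hτ, zero_pow (by omega : r ≠ 0)]
    rw [mul_zero, zero_div]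
    positivity
  · have he : (0:ℝ) < Real.exp 1 := Real.exp_pos 1
    have hr' : (0:ℝ) < r := by exact_mod_cast hr
    set S := Real.sqrt (2*π) * Real.exp (1/13) with hS
    have hSpos : 0 < S := by positivity
    set w := 2 * (r:ℝ) / (|τ| * Real.exp 1) with hw
    have hwpos : 0 < w := by positivity
    have harg : -(|τ| * Real.exp 1 / 2) * (w * Real.log w) = -((r:ℝ) * Real.log w) := by
      rw [hw]; field_simp
    rw [harg]
    have hexp : Real.exp (-((r:ℝ) * Real.log w)) = (w ^ r)⁻¹ := by
      rw [Real.exp_neg, ← Real.log_pow, Real.exp_log (by positivity)]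
    rw [hexp]
    have hrw : (4 / S) * (w ^ r)⁻¹ = 4 / (S * w ^ r) := by
      field_simp
    rw [hrw, div_le_div_iff₀ (by positivity) (by positivity)]
    have hkey := stirling_lb r hr
    have htw : |τ| * w = 2 * r / Real.exp 1 := by
      rw [hw]; field_simp
    have hmain : S * (|τ| ^ r * w ^ r) ≤ (Nat.factorial r : ℝ) * 2 ^ r := by
      calc S * (|τ| ^ r * w ^ r) = S * (2 * r / Real.exp 1) ^ r := by
            rw [← mul_pow, htw]
        _ = (S * (r:ℝ) ^ r / Real.exp 1 ^ r) * 2 ^ r := by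
            rw [div_pow, mul_pow]; ring
        _ ≤ (Nat.factorial r : ℝ) * 2 ^ r := by
            apply mul_le_mul_of_nonneg_right _ (by positivity)
            rw [div_le_iff₀ (by positivity)]
            exact hkey
    nlinarith [hmain]
end

section
/- Let f : [v_a, v_b] → ℝ≥0 be integrable, monotonically increasing on [v_a, v_max] and monotonically decreasing on [v_max, v_b] for some v_max ∈ [v_a, v_b]. For q ∈ ℕ, set v_j = v_a + j(v_b − v_a)/q. Then Σ_{j=1}^q f(v_j) ≤ (q/(v_b − v_a)) ∫_{v_a}^{v_b} f(v) dv + f(v_max). -/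
open MeasureTheory Set Finset

/-!
On each cell `[v_i, v_{i+1}]` of the grid a unimodal `f` is bounded below by
`min (f v_i) (f v_{i+1})`, so `h ∑ min (f v_i) (f v_{i+1}) ≤ ∫ f` with `h = (v_b - v_a)/q`.
The sum of the samples exceeds the sum of these minima by the total upward variation of the
sequence `f v_j`, which for a unimodal sequence telescopes to at most `f v_max - f v_a ≤ f v_max`.
-/

section Unimodal

variable {f : ℝ → ℝ} {a m b : ℝ}

theorem min_le_of_monotoneOn_of_antitoneOn (hmono : MonotoneOn f (Icc a m))
    (hanti : AntitoneOn f (Icc m b)) {s x t : ℝ} (hs : a ≤ s) (hsx : s ≤ x) (hxt : x ≤ t)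
    (ht : t ≤ b) : min (f s) (f t) ≤ f x := by
  rcases le_total x m with hxm | hmx
  · exact (min_le_left _ _).trans (hmono ⟨hs, hsx.trans hxm⟩ ⟨hs.trans hsx, hxm⟩ hsx)
  · exact (min_le_right _ _).trans (hanti ⟨hmx, hxt.trans ht⟩ ⟨hmx.trans hxt, ht⟩ hxt)

theorem le_of_monotoneOn_of_antitoneOn (hmono : MonotoneOn f (Icc a m))
    (hanti : AntitoneOn f (Icc m b)) {x : ℝ} (hx : x ∈ Icc a b) : f x ≤ f m := by
  rcases le_total x m with hxm | hmx
  · exact hmono ⟨hx.1, hxm⟩ ⟨hx.1.trans hxm, le_rfl⟩ hxm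
  · exact hanti ⟨le_rfl, hmx.trans hx.2⟩ ⟨hmx, hx.2⟩ hmx

end Unimodal

theorem mul_le_intervalIntegral_of_le {f : ℝ → ℝ} {s t C : ℝ} (hst : s ≤ t)
    (hf : IntervalIntegrable f volume s t) (hC : ∀ x ∈ Icc s t, C ≤ f x) :
    (t - s) * C ≤ ∫ x in s..t, f x := by
  have := intervalIntegral.integral_mono_on hst intervalIntegrable_const hf hC
  rwa [intervalIntegral.integral_const, smul_eq_mul] at this

theorem sum_mul_min_le_intervalIntegral {f : ℝ → ℝ} {v : ℕ → ℝ} (hv : Monotone v) {q : ℕ}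
    (hf : IntervalIntegrable f volume (v 0) (v q))
    (hqc : ∀ s x t, v 0 ≤ s → s ≤ x → x ≤ t → t ≤ v q → min (f s) (f t) ≤ f x) :
    ∑ i ∈ range q, (v (i + 1) - v i) * min (f (v i)) (f (v (i + 1))) ≤
      ∫ x in v 0..v q, f x := by
  have hcell : ∀ i < q, IntervalIntegrable f volume (v i) (v (i + 1)) := fun i hi =>
    hf.mono_set <| uIcc_subset_uIcc
      (mem_uIcc_of_le (hv (Nat.zero_le _)) (hv hi.le))
      (mem_uIcc_of_le (hv (Nat.zero_le _)) (hv hi))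
  rw [← intervalIntegral.sum_integral_adjacent_intervals hcell]
  refine sum_le_sum fun i hi => ?_
  have hiq : i < q := mem_range.1 hi
  exact mul_le_intervalIntegral_of_le (hv i.le_succ) (hcell i hiq) fun x hx =>
    hqc _ _ _ (hv (Nat.zero_le _)) hx.1 hx.2 (hv hiq)

theorem sum_Icc_le_sum_min_add_sub {a : ℕ → ℝ} {q : ℕ} {M : ℝ} (hM : ∀ j ≤ q, a j ≤ M)
    (hqc : ∀ i j l, i ≤ j → j ≤ l → l ≤ q → min (a i) (a l) ≤ a j) :
    ∑ j ∈ Icc 1 q, a j ≤ ∑ i ∈ range q, min (a i) (a (i + 1)) + (M - a 0) := by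
  induction q generalizing M with
  | zero => simpa using hM 0 le_rfl
  | succ q ih =>
    have hqc' : ∀ i j l, i ≤ j → j ≤ l → l ≤ q → min (a i) (a l) ≤ a j :=
      fun i j l hij hjl hl => hqc i j l hij hjl (hl.trans q.le_succ)
    rw [sum_Icc_succ_top (by omega), sum_range_succ]
    rcases le_or_gt (a (q + 1)) (a q) with hdown | hup
    · have := ih (fun j hj => hM j (hj.trans q.le_succ)) hqc'
      rw [min_eq_right hdown]
      linarith
    · -- an upward last step makes `a q` the maximum of `a 0, …, a q`
      have hpeak : ∀ j ≤ q, a j ≤ a q := fun j hj =>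
        (min_le_iff.1 (hqc j q (q + 1) hj q.le_succ le_rfl)).resolve_right (not_le.2 hup)
      have := ih hpeak hqc'
      rw [min_eq_left hup.le]
      linarith [hM (q + 1) le_rfl]

theorem sum_Icc_le_div_mul_intervalIntegral_add {f : ℝ → ℝ} {va vb vmax : ℝ} {q : ℕ}
    (hq : 0 < q) (hab : va < vb) (hf0 : 0 ≤ f va)
    (hint : IntervalIntegrable f volume va vb)
    (hmono : MonotoneOn f (Icc va vmax)) (hanti : AntitoneOn f (Icc vmax vb)) :
    ∑ j ∈ Icc 1 q, f (va + j * ((vb - va) / q)) ≤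
      (q : ℝ) / (vb - va) * (∫ v in va..vb, f v) + f vmax := by
  set h := (vb - va) / q
  have hh : 0 < h := div_pos (sub_pos.2 hab) (Nat.cast_pos.2 hq)
  set v : ℕ → ℝ := fun j => va + j * h
  have hv : Monotone v := fun i j hij => by simp only [v]; gcongr
  have hv0 : v 0 = va := by simp [v]
  have hvq : v q = vb := by simp only [v, h]; field_simp; ring
  have hstep : ∀ i, v (i + 1) - v i = h := fun i => by simp only [v]; push_cast; ring
  have hqc : ∀ s x t, v 0 ≤ s → s ≤ x → x ≤ t → t ≤ v q → min (f s) (f t) ≤ f x := by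
    rw [hv0, hvq]; exact fun s x t => min_le_of_monotoneOn_of_antitoneOn hmono hanti
  have hcells : h * ∑ i ∈ range q, min (f (v i)) (f (v (i + 1))) ≤ ∫ v in va..vb, f v := by
    have := sum_mul_min_le_intervalIntegral hv (by rwa [hv0, hvq]) hqc
    rwa [hv0, hvq, sum_congr rfl fun i _ => by rw [hstep i], ← mul_sum] at this
  have hsamples := sum_Icc_le_sum_min_add_sub (a := fun j => f (v j)) (M := f vmax)
    (fun j hj => le_of_monotoneOn_of_antitoneOn hmono hanti
      ⟨hv0 ▸ hv (Nat.zero_le j), hvq ▸ hv hj⟩)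
    (fun i j l hij hjl hl => hqc _ _ _ (hv (Nat.zero_le i)) (hv hij) (hv hjl) (hv hl))
  have hqh : (q : ℝ) / (vb - va) = h⁻¹ := (inv_div _ _).symm
  calc ∑ j ∈ Icc 1 q, f (v j)
      ≤ ∑ i ∈ range q, min (f (v i)) (f (v (i + 1))) + f vmax := by
        simp only [hv0] at hsamples; linarith
    _ ≤ (q : ℝ) / (vb - va) * (∫ v in va..vb, f v) + f vmax := by
        rw [hqh]; gcongr; rwa [le_inv_mul_iff₀ hh]

theorem sum_le_integral_unimodal_general (va vb vmax : ℝ) (f : ℝ → ℝ) (q : ℕ)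
    (hq : 0 < q) (hab : va < vb)
    (hf0 : ∀ v ∈ Set.Icc va vb, 0 ≤ f v)
    (hint : IntervalIntegrable f volume va vb)
    (hmono : MonotoneOn f (Set.Icc va vmax))
    (hanti : AntitoneOn f (Set.Icc vmax vb)) :
    ∑ j ∈ Finset.Icc 1 q, f (va + (j : ℝ) * (vb - va) / q) ≤
      (q : ℝ) / (vb - va) * ∫ v in va..vb, f v + f vmax := by
  have hfa : 0 ≤ f va := hf0 va (left_mem_Icc.2 hab.le)
  have hfmax : 0 ≤ f vmax :=
    hfa.trans (le_of_monotoneOn_of_antitoneOn hmono hanti (left_mem_Icc.2 hab.le))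
  have hq1 : (1 : ℝ) ≤ q := Nat.one_le_cast.2 hq
  have hbound := sum_Icc_le_div_mul_intervalIntegral_add hq hab hfa hint hmono hanti
  simp_rw [mul_div_assoc]
  -- the integrand on the right is `f v + f vmax`, so the right side is `q/(vb-va) ∫ f + q f vmax`
  rw [intervalIntegral.integral_add hint intervalIntegrable_const,
    intervalIntegral.integral_const, smul_eq_mul, mul_add, ← mul_assoc,
    div_mul_cancel₀ _ (sub_pos.2 hab).ne']
  linarith [le_mul_of_one_le_left hfmax hq1]

/-- Let `f : [v_a, v_b] → ℝ≥0` be integrable, monotonically increasing on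
`[v_a, v_max]` and monotonically decreasing on `[v_max, v_b]`. For a positive
integer `q` and `v_j = v_a + j(v_b − v_a)/q`, one has
`∑_{j=1}^q f(v_j) ≤ (q/(v_b − v_a)) ∫_{v_a}^{v_b} f + f(v_max)`. -/
theorem sum_le_integral_unimodal (va vb vmax : ℝ) (f : ℝ → ℝ) (q : ℕ)
    (hq : 0 < q) (hab : va < vb) (hmax : vmax ∈ Set.Icc va vb)
    (hf0 : ∀ v ∈ Set.Icc va vb, 0 ≤ f v)
    (hint : IntervalIntegrable f volume va vb)
    (hmono : MonotoneOn f (Set.Icc va vmax))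
    (hanti : AntitoneOn f (Set.Icc vmax vb)) :
    ∑ j ∈ Finset.Icc 1 q, f (va + (j : ℝ) * (vb - va) / q) ≤
      (q : ℝ) / (vb - va) * ∫ v in va..vb, f v + f vmax :=
  sum_le_integral_unimodal_general va vb vmax f q hq hab hf0 hint hmono hanti
end

section
/- For every κ ≥ 2, the path length L = (√2·κ/√(1+κ²))·log((√(1+κ²)+1)/(κ√(1+κ²) − κ²)) satisfies L ≤ √2·log(2κ + 3). -/
open Real

/-- For `κ ≥ 2`, the path length
`L = (√2 κ/√(1+κ²)) log((√(1+κ²)+1)/(κ√(1+κ²) − κ²))` satisfies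
`L ≤ √2 log(2κ + 3)`. -/
theorem path_length_bound (κ : ℝ) (hκ : 2 ≤ κ) :
    Real.sqrt 2 * κ / Real.sqrt (1 + κ ^ 2) *
        Real.log ((Real.sqrt (1 + κ ^ 2) + 1) /
          (κ * Real.sqrt (1 + κ ^ 2) - κ ^ 2)) ≤
      Real.sqrt 2 * Real.log (2 * κ + 3) := by
  set s := Real.sqrt (1 + κ ^ 2) with hs
  have hκ0 : (0:ℝ) < κ := by linarith
  have hs2 : s ^ 2 = 1 + κ ^ 2 := Real.sq_sqrt (by positivity)
  have hs0 : 0 < s := Real.sqrt_pos.2 (by positivity)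
  have hsκ : κ < s := by nlinarith
  have hden : 0 < κ * s - κ ^ 2 := by nlinarith
  have hR : (s + 1) / (κ * s - κ ^ 2) = (s + 1) * (s + κ) / κ := by
    rw [div_eq_div_iff hden.ne' hκ0.ne']
    linear_combination (-(s + 1) * κ) * hs2
  have key : s * (κ + 1) ≤ κ ^ 2 + 2 * κ - 1 := by
    nlinarith [sq_nonneg (s * (κ + 1) - (κ ^ 2 + 2 * κ - 1)), hs2, hs0.le]
  have hR1 : 1 ≤ (s + 1) * (s + κ) / κ := by
    rw [le_div_iff₀ hκ0]; nlinarith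
  have hR2 : (s + 1) * (s + κ) / κ ≤ 2 * κ + 3 := by
    rw [div_le_iff₀ hκ0]; nlinarith
  have hlog0 : 0 ≤ Real.log ((s + 1) * (s + κ) / κ) := Real.log_nonneg hR1
  have hlog : Real.log ((s + 1) * (s + κ) / κ) ≤ Real.log (2 * κ + 3) :=
    Real.log_le_log (by linarith) hR2
  rw [hR]
  have hdiv : κ / s ≤ 1 := (div_le_one hs0).2 hsκ.le
  calc Real.sqrt 2 * κ / s * Real.log ((s + 1) * (s + κ) / κ)
      = Real.sqrt 2 * (κ / s) * Real.log ((s + 1) * (s + κ) / κ) := by ring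
    _ ≤ Real.sqrt 2 * 1 * Real.log (2 * κ + 3) := by
        apply mul_le_mul _ hlog hlog0 (by positivity)
        have h2 : (0:ℝ) ≤ Real.sqrt 2 := Real.sqrt_nonneg 2
        nlinarith
    _ = Real.sqrt 2 * Real.log (2 * κ + 3) := by ring
end

section
/- Let k ≥ 1 be an integer and 0 < Δ < 1/√12. Define R_k(x, Δ) = T_k(−1 + 2(x² − Δ²)/(1 − Δ²)) / T_k(−1 − 2Δ²/(1 − Δ²)), where T_k is the k-th Chebyshev polynomial of the first kind. Then for all x with Δ ≤ |x| ≤ 1, |R_k(x, Δ)| ≤ 1/cosh(k·log((1+Δ)/(1−Δ))). -/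
open Real Polynomial

private lemma T_abs_le_one (n : ℤ) (y : ℝ) (h1 : -1 ≤ y) (h2 : y ≤ 1) :
    |(Polynomial.Chebyshev.T ℝ n).eval y| ≤ 1 := by
  have : y = Real.cos (Real.arccos y) := (Real.cos_arccos h1 h2).symm
  rw [this, Polynomial.Chebyshev.T_real_cos]
  exact Real.abs_cos_le_one _

private lemma T_neg_cosh (n : ℤ) (t : ℝ) :
    (Polynomial.Chebyshev.T ℝ n).eval (-Real.cosh t) =
      Real.cos (n * Real.pi) * Real.cosh (n * t) := by
  have h : (((Polynomial.Chebyshev.T ℝ n).eval (-Real.cosh t) : ℝ) : ℂ) =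
      ((Real.cos (n * Real.pi) * Real.cosh (n * t) : ℝ) : ℂ) := by
    rw [Polynomial.Chebyshev.complex_ofReal_eval_T]
    have hc : ((-Real.cosh t : ℝ) : ℂ) = Complex.cos (Real.pi + t * Complex.I) := by
      rw [Complex.cos_add]
      simp [Complex.cos_mul_I, ← Complex.ofReal_cosh]
    rw [hc, Polynomial.Chebyshev.T_complex_cos]
    rw [mul_add, Complex.cos_add]
    have hs : Complex.sin ((n : ℂ) * Real.pi) = 0 := Complex.sin_int_mul_pi n
    rw [hs]
    rw [show (n : ℂ) * ((t : ℂ) * Complex.I) = ((n * t : ℝ) : ℂ) * Complex.I by push_cast; ring,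
      Complex.cos_mul_I]
    push_cast [Complex.ofReal_cos, Complex.ofReal_cosh]
    ring
  exact_mod_cast h

/-- Filtering polynomial bound: for an integer `k ≥ 1`, `0 < Δ < 1/√12`, and
`Δ ≤ |x| ≤ 1`, the filtering polynomial
`R_k(x,Δ) = T_k(−1 + 2(x² − Δ²)/(1 − Δ²)) / T_k(−1 − 2Δ²/(1 − Δ²))`
satisfies `|R_k(x,Δ)| ≤ 1/cosh(k log((1+Δ)/(1−Δ)))`. -/
theorem filtering_poly_bound (k : ℕ) (hk : 1 ≤ k) (Δ : ℝ)
    (hΔ0 : 0 < Δ) (hΔ : Δ < 1 / Real.sqrt 12)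
    (x : ℝ) (hx1 : Δ ≤ |x|) (hx2 : |x| ≤ 1) :
    |(Polynomial.Chebyshev.T ℝ (k : ℤ)).eval (-1 + 2 * (x ^ 2 - Δ ^ 2) / (1 - Δ ^ 2)) /
        (Polynomial.Chebyshev.T ℝ (k : ℤ)).eval (-1 - 2 * Δ ^ 2 / (1 - Δ ^ 2))| ≤
      1 / Real.cosh (k * Real.log ((1 + Δ) / (1 - Δ))) := by
  have h12 : (1:ℝ) < Real.sqrt 12 := by
    rw [show (12:ℝ) = 12 by norm_num]
    nlinarith [Real.sq_sqrt (by norm_num : (12:ℝ) ≥ 0), Real.sqrt_nonneg (12:ℝ)]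
  have hΔ1 : Δ < 1 := lt_of_lt_of_le hΔ (by
    rw [div_le_one (lt_trans one_pos h12)]; exact le_of_lt h12)
  have h1mΔ : 0 < 1 - Δ := by linarith
  have h1pΔ : 0 < 1 + Δ := by linarith
  have hden : 0 < 1 - Δ ^ 2 := by nlinarith
  set t := Real.log ((1 + Δ) / (1 - Δ)) with ht
  have hexp : Real.exp t = (1 + Δ) / (1 - Δ) :=
    Real.exp_log (div_pos h1pΔ h1mΔ)
  have hcosh : Real.cosh t = (1 + Δ ^ 2) / (1 - Δ ^ 2) := by
    rw [Real.cosh_eq, Real.exp_neg, hexp]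
    field_simp
    ring
  -- denominator
  have hdarg : -1 - 2 * Δ ^ 2 / (1 - Δ ^ 2) = -Real.cosh t := by
    rw [hcosh]; field_simp; ring
  have hdval : |(Polynomial.Chebyshev.T ℝ (k : ℤ)).eval (-1 - 2 * Δ ^ 2 / (1 - Δ ^ 2))| =
      Real.cosh ((k : ℝ) * t) := by
    rw [hdarg, T_neg_cosh, abs_mul]
    have : |Real.cos ((k : ℤ) * Real.pi)| = 1 := by
      have := Real.abs_cos_int_mul_pi (k : ℤ)
      push_cast at this ⊢
      exact this
    push_cast at this ⊢
    rw [this, one_mul, abs_of_pos (Real.cosh_pos _)]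
  -- numerator
  have hx2sq : x ^ 2 ≤ 1 := by nlinarith [sq_abs x, abs_nonneg x]
  have hx1sq : Δ ^ 2 ≤ x ^ 2 := by nlinarith [sq_abs x, abs_nonneg x]
  have hnum : |(Polynomial.Chebyshev.T ℝ (k : ℤ)).eval
      (-1 + 2 * (x ^ 2 - Δ ^ 2) / (1 - Δ ^ 2))| ≤ 1 := by
    apply T_abs_le_one
    · have : 0 ≤ 2 * (x ^ 2 - Δ ^ 2) / (1 - Δ ^ 2) :=
        div_nonneg (by nlinarith) hden.le
      linarith
    · have : 2 * (x ^ 2 - Δ ^ 2) / (1 - Δ ^ 2) ≤ 2 := by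
        rw [div_le_iff₀ hden]; nlinarith
      linarith
  rw [abs_div, hdval]
  apply div_le_div₀ (by norm_num) hnum (Real.cosh_pos _) le_rfl
end

section
/- The function s : ℝ → ℝ defined by s(v) = (−κ²·e^{−v√(κ²+1)/(√2κ)} + e^{v√(κ²+1)/(√2κ)} + 2κ²) / (2(κ²+1)) satisfies ds/dv = √(((1−s)² + (s/κ)²)/2), and moreover s(v_a) = 0 and s(v_b) = 1, where v_a = (√2κ/√(1+κ²))·log(κ√(1+κ²) − κ²) and v_b = (√2κ/√(1+κ²))·log(√(1+κ²)+1). -/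
open Real

/-- The adiabatic schedule `s(v)`. -/
noncomputable def schedule (κ v : ℝ) : ℝ :=
  (-κ ^ 2 * Real.exp (-v * (Real.sqrt (κ ^ 2 + 1) / (Real.sqrt 2 * κ))) +
      Real.exp (v * (Real.sqrt (κ ^ 2 + 1) / (Real.sqrt 2 * κ))) + 2 * κ ^ 2) /
    (2 * (κ ^ 2 + 1))

/-
With `c = √(κ²+1)`, `r = c/(√2 κ)` (`rate`) and `x = e^{r v}`, the schedule is the rational
function `p(x) = (x - κ²/x + 2κ²)/(2c²)` (`profile`), so `ds/dv = r (x + κ²/x)/(2c²)` (`speed`).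
Writing `u = x - κ²/x`, one finds `(1-p)² + (p/κ)² = c² (u² + 4κ²)/(κ² (2c²)²)`, and
`u² + 4κ² = (x + κ²/x)²`; with `r² = c²/(2κ²)` this is the differential equation. At the endpoints
`x = κ(c - κ) = κ/(c + κ)`, where `u = -2κ²`, and `x = c + 1`, where `κ²/x = c - 1` and `u = 2`.
-/

namespace Schedule

noncomputable def rate (κ : ℝ) : ℝ := √(κ ^ 2 + 1) / (√2 * κ)

noncomputable def profile (κ x : ℝ) : ℝ := (x - κ ^ 2 / x + 2 * κ ^ 2) / (2 * (κ ^ 2 + 1))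

noncomputable def speed (κ x : ℝ) : ℝ := rate κ * (x + κ ^ 2 / x) / (2 * (κ ^ 2 + 1))

variable {κ : ℝ}

lemma schedule_eq_profile (κ v : ℝ) : schedule κ v = profile κ (exp (rate κ * v)) := by
  simp only [schedule, profile, rate, neg_mul, exp_neg, mul_comm v]
  ring

lemma rate_sq (hκ : κ ≠ 0) : rate κ ^ 2 = (κ ^ 2 + 1) / (2 * κ ^ 2) := by
  rw [rate, div_pow, mul_pow, sq_sqrt (by positivity), sq_sqrt zero_le_two]

lemma speed_nonneg (hκ : 0 < κ) {x : ℝ} (hx : 0 < x) : 0 ≤ speed κ x := by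
  unfold speed rate
  positivity

lemma hasDerivAt_profile (κ : ℝ) {x : ℝ} (hx : x ≠ 0) :
    HasDerivAt (profile κ) ((1 + κ ^ 2 / x ^ 2) / (2 * (κ ^ 2 + 1))) x := by
  have hp : profile κ = fun y => (y - κ ^ 2 * y⁻¹ + 2 * κ ^ 2) / (2 * (κ ^ 2 + 1)) := by
    funext y
    rw [profile, div_eq_mul_inv (κ ^ 2)]
  rw [hp]
  refine ((((hasDerivAt_id' x).sub ((hasDerivAt_inv hx).const_mul (κ ^ 2))).add_const
    (2 * κ ^ 2)).div_const (2 * (κ ^ 2 + 1))).congr_deriv ?_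
  ring

lemma hasDerivAt_schedule (κ v : ℝ) :
    HasDerivAt (schedule κ) (speed κ (exp (rate κ * v))) v := by
  have hx := exp_pos (rate κ * v)
  rw [show schedule κ = _ from funext (schedule_eq_profile κ)]
  refine ((hasDerivAt_profile κ hx.ne').comp v
    (((hasDerivAt_id' v).const_mul (rate κ)).exp)).congr_deriv ?_
  rw [speed]
  field_simp

lemma half_sq_add_sq_profile (hκ : κ ≠ 0) {x : ℝ} (hx : x ≠ 0) :
    ((1 - profile κ x) ^ 2 + (profile κ x / κ) ^ 2) / 2 = speed κ x ^ 2 := by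
  simp only [speed, div_pow, mul_pow, rate_sq hκ]
  rw [profile]
  field_simp
  ring

lemma schedule_mul_log (hκ : κ ≠ 0) {y : ℝ} (hy : 0 < y) :
    schedule κ (√2 * κ / √(1 + κ ^ 2) * log y) = profile κ y := by
  have hv : rate κ * (√2 * κ / √(1 + κ ^ 2) * log y) = log y := by
    rw [rate, add_comm 1]
    field_simp
  rw [schedule_eq_profile, hv, exp_log hy]

lemma mul_sqrt_one_add_sq_sub_sq_pos (hκ : 0 < κ) : 0 < κ * √(1 + κ ^ 2) - κ ^ 2 := by
  have hcκ : κ < √(1 + κ ^ 2) := lt_sqrt_of_sq_lt (by linarith)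
  nlinarith

lemma profile_mul_sqrt_sub_sq (hκ : 0 < κ) : profile κ (κ * √(1 + κ ^ 2) - κ ^ 2) = 0 := by
  have hx : κ ^ 2 / (κ * √(1 + κ ^ 2) - κ ^ 2) = κ * (√(1 + κ ^ 2) + κ) := by
    rw [div_eq_iff (mul_sqrt_one_add_sq_sub_sq_pos hκ).ne']
    linear_combination -κ ^ 2 * sq_sqrt (by positivity : (0 : ℝ) ≤ 1 + κ ^ 2)
  rw [profile, hx]
  ring

lemma profile_sqrt_add_one (κ : ℝ) : profile κ (√(1 + κ ^ 2) + 1) = 1 := by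
  have hx : κ ^ 2 / (√(1 + κ ^ 2) + 1) = √(1 + κ ^ 2) - 1 := by
    rw [div_eq_iff (by positivity)]
    linear_combination -sq_sqrt (by positivity : (0 : ℝ) ≤ 1 + κ ^ 2)
  rw [profile, hx, div_eq_one_iff_eq (by positivity)]
  ring

end Schedule

/-- The schedule `s(v)` satisfies `ds/dv = √(((1−s)² + (s/κ)²)/2)`, and
`s(v_a) = 0`, `s(v_b) = 1` where
`v_a = (√2κ/√(1+κ²)) log(κ√(1+κ²) − κ²)` and `v_b = (√2κ/√(1+κ²)) log(√(1+κ²)+1)`. -/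
theorem schedule_properties (κ : ℝ) (hκ : 1 < κ) :
    (∀ v : ℝ, HasDerivAt (schedule κ)
        (Real.sqrt (((1 - schedule κ v) ^ 2 + (schedule κ v / κ) ^ 2) / 2)) v) ∧
    schedule κ (Real.sqrt 2 * κ / Real.sqrt (1 + κ ^ 2) *
        Real.log (κ * Real.sqrt (1 + κ ^ 2) - κ ^ 2)) = 0 ∧
    schedule κ (Real.sqrt 2 * κ / Real.sqrt (1 + κ ^ 2) *
        Real.log (Real.sqrt (1 + κ ^ 2) + 1)) = 1 := by
  have hκ0 : 0 < κ := by linarith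
  refine ⟨fun v => ?_, ?_, ?_⟩
  · have hx := exp_pos (Schedule.rate κ * v)
    rw [Schedule.schedule_eq_profile, Schedule.half_sq_add_sq_profile hκ0.ne' hx.ne',
      sqrt_sq (Schedule.speed_nonneg hκ0 hx)]
    exact Schedule.hasDerivAt_schedule κ v
  · rw [Schedule.schedule_mul_log hκ0.ne' (Schedule.mul_sqrt_one_add_sq_sub_sq_pos hκ0),
      Schedule.profile_mul_sqrt_sub_sq hκ0]
  · rw [Schedule.schedule_mul_log hκ0.ne' (by positivity), Schedule.profile_sqrt_add_one]
end
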